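/- Let v be a ℤⁿ-valued valuation on ℂ[x₁,…,xₙ] such that for every finite-dimensional ℂ-subspace L ⊆ ℂ[x₁,…,xₙ], the set v(L \ {0}) has cardinality equal to dim_ℂ L, and let v' be its extension to ℂ[x₁,…,x_{n+1}] defined by v'(x_{n+1}^e·g) = (v(g|_{x_{n+1}=0}), e) for x_{n+1} not dividing g. Let I ⊆ ℂ[x₀,…,xₙ] be a homogeneous ideal and I' ⊆ ℂ[x₀,…,x_{n+1}] its extension. Let Δ(I) ⊆ ℝ^(n+1) be the Newton–Okounkov body of I constructed from v, and Δ(I') ⊆ ℝ^(n+2) the Newton–Okounkov body of I' constructed from v'. Then Δ(I') = Δ(I) × ℝ_{≥0}, i.e. Δ(I') = {(a₀,…,aₙ,a_{n+1}) ∈ ℝ^(n+2) : (a₀,…,aₙ) ∈ Δ(I) and a_{n+1} ≥ 0}. -/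

import Mathlib

/-!
Write `f ∈ ℂ[x₀,…,x_{n+1}]` as `∑ₑ x_{n+1}^e fₑ` with `fₑ ∈ ℂ[x₀,…,xₙ]`. Then `f ∈ (I')ᵗ` iff every
`fₑ ∈ Iᵗ`, and if `f` is homogeneous of degree `s` then `fₑ` is homogeneous of degree `s - e`.
After setting `x₀ = 1`, `v'` reads off the least `e` with `fₑ|_{x₀=1} ≠ 0` together with
`v(fₑ|_{x₀=1})`. Hence `U_{I'}` is the image of `U_I × ℕ` under the linear isomorphism
`((a, s, t), e) ↦ ((a, e), s + e, t)`, while `x_{n+1}^e fₑ` shows that every such point occurs.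

Closed convex cone hulls commute with linear isomorphisms and, for sets containing `0`, with
products; the hull of `ℕ` is `ℝ_{≥0}`, and `0 ∈ U_I` because `v(1) = 0`. So `Σ(U_{I'})` is the
image of `Σ(U_I) × ℝ_{≥0}`, and slicing at `t = 1` and applying `τ`, which turns the shear into
appending the last coordinate, finishes the proof.
-/

open MvPolynomial

/-- The lexicographic linear order on `ℤⁿ`. -/
noncomputable instance lexPiIntLinearOrder (n : ℕ) : LinearOrder (Lex (Fin n → ℤ)) :=
  @Pi.Lex.linearOrder (Fin n) (fun _ => ℤ) Fin.instLinearOrder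
    (inferInstanceAs (WellFoundedLT (Fin n))) inferInstance

noncomputable instance lexPiIntMin (n : ℕ) : Min (Lex (Fin n → ℤ)) :=
  @LinearOrder.toMin _ (lexPiIntLinearOrder n)

/-- The degree-`s` homogeneous component of an ideal in `ℂ[x₀,…,xₘ]`,
as a `ℂ`-subspace of the polynomial ring. -/
noncomputable def idealComponent {m : ℕ} (I : Ideal (MvPolynomial (Fin (m + 1)) ℂ)) (s : ℕ) :
    Submodule ℂ (MvPolynomial (Fin (m + 1)) ℂ) :=
  I.restrictScalars ℂ ⊓ homogeneousSubmodule (Fin (m + 1)) ℂ s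

/-- Setting `x₀ = 1`: the dehomogenization map `ℂ[x₀,…,xₘ] → ℂ[x₁,…,xₘ]`. -/
noncomputable def dehom (m : ℕ) : MvPolynomial (Fin (m + 1)) ℂ →ₐ[ℂ] MvPolynomial (Fin m) ℂ :=
  aeval (Fin.cases 1 X)

/-- The graded semigroup `U_I ⊆ ℝᵐ × ℝ²` of a homogeneous ideal `I ⊆ ℂ[x₀,…,xₘ]` with
respect to a `ℤᵐ`-valued valuation `w` on `ℂ[x₁,…,xₘ]`:
`U_I = {(a,s,t) : s,t ∈ ℤ_{≥0}, a ∈ w(((Iᵗ)_s)|_{x₀=1})}`. -/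
def gradedSemigroup {m : ℕ} (w : MvPolynomial (Fin m) ℂ → (Fin m → ℤ))
    (I : Ideal (MvPolynomial (Fin (m + 1)) ℂ)) : Set ((Fin m → ℝ) × ℝ × ℝ) :=
  {p | ∃ s t : ℕ, ∃ α ∈ w ''
      ((⇑(dehom m) '' ((idealComponent (I ^ t) s : Set (MvPolynomial (Fin (m + 1)) ℂ))) \ {0})),
    p = (fun i => (α i : ℝ), (s : ℝ), (t : ℝ))}

/-- The smallest closed convex cone containing a subset `U` of a real vector space. -/
def closedConvexConeHull {E : Type*} [AddCommGroup E] [Module ℝ E] [TopologicalSpace E]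
    (U : Set E) : Set E :=
  ⋂₀ {C : Set E | U ⊆ C ∧ IsClosed C ∧ Convex ℝ C ∧ ∀ c : ℝ, 0 ≤ c → ∀ x ∈ C, c • x ∈ C}

/-- The slice `underlineΔ(I) = Σ(U_I) ∩ {t = 1} ⊆ ℝᵐ × ℝ`. -/
def underlineDelta {m : ℕ} (w : MvPolynomial (Fin m) ℂ → (Fin m → ℤ))
    (I : Ideal (MvPolynomial (Fin (m + 1)) ℂ)) : Set ((Fin m → ℝ) × ℝ) :=
  {p | (p.1, p.2, (1 : ℝ)) ∈ closedConvexConeHull (gradedSemigroup w I)}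

/-- The shear isomorphism `τ((a₁,…,aₘ),s) = (s − (a₁+⋯+aₘ), a₁,…,aₘ)`. -/
def tauMap (m : ℕ) : (Fin m → ℝ) × ℝ → (Fin (m + 1) → ℝ) :=
  fun p => Fin.cons (p.2 - ∑ i, p.1 i) p.1

/-- The Newton–Okounkov body `Δ(I) ⊆ ℝ^(m+1)` of a homogeneous ideal `I ⊆ ℂ[x₀,…,xₘ]`
with respect to a valuation `w` on `ℂ[x₁,…,xₘ]`. -/
def NObody {m : ℕ} (w : MvPolynomial (Fin m) ℂ → (Fin m → ℤ))
    (I : Ideal (MvPolynomial (Fin (m + 1)) ℂ)) : Set (Fin (m + 1) → ℝ) :=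
  tauMap m '' underlineDelta w I

section ClosedConvexConeHull

variable {E F : Type*} [AddCommGroup E] [Module ℝ E] [TopologicalSpace E]
  [AddCommGroup F] [Module ℝ F] [TopologicalSpace F]

theorem subset_closedConvexConeHull (U : Set E) : U ⊆ closedConvexConeHull U :=
  fun _ hx => Set.mem_sInter.mpr fun _ hC => hC.1 hx

theorem closedConvexConeHull_minimal {U C : Set E} (hUC : U ⊆ C) (hC : IsClosed C)
    (hCc : Convex ℝ C) (hCs : ∀ c : ℝ, 0 ≤ c → ∀ x ∈ C, c • x ∈ C) :
    closedConvexConeHull U ⊆ C :=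
  Set.sInter_subset_of_mem ⟨hUC, hC, hCc, hCs⟩

theorem isClosed_closedConvexConeHull (U : Set E) : IsClosed (closedConvexConeHull U) :=
  isClosed_sInter fun _ hC => hC.2.1

theorem convex_closedConvexConeHull (U : Set E) : Convex ℝ (closedConvexConeHull U) :=
  convex_sInter fun _ hC => hC.2.2.1

theorem smul_mem_closedConvexConeHull {U : Set E} {c : ℝ} (hc : 0 ≤ c) {x : E}
    (hx : x ∈ closedConvexConeHull U) : c • x ∈ closedConvexConeHull U :=
  Set.mem_sInter.mpr fun C hC => hC.2.2.2 c hc x (Set.mem_sInter.mp hx C hC)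

theorem add_mem_closedConvexConeHull {U : Set E} {x y : E} (hx : x ∈ closedConvexConeHull U)
    (hy : y ∈ closedConvexConeHull U) : x + y ∈ closedConvexConeHull U := by
  have hmid := convex_closedConvexConeHull U hx hy (by norm_num : (0 : ℝ) ≤ 1 / 2)
    (by norm_num : (0 : ℝ) ≤ 1 / 2) (by norm_num)
  simpa [smul_add, smul_smul] using
    smul_mem_closedConvexConeHull (by norm_num : (0 : ℝ) ≤ 2) hmid

theorem closedConvexConeHull_mono {U V : Set E} (h : U ⊆ V) :
    closedConvexConeHull U ⊆ closedConvexConeHull V :=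
  closedConvexConeHull_minimal (h.trans (subset_closedConvexConeHull V))
    (isClosed_closedConvexConeHull V) (convex_closedConvexConeHull V)
    fun _ hc _ hx => smul_mem_closedConvexConeHull hc hx

theorem image_closedConvexConeHull_subset (L : E →L[ℝ] F) (U : Set E) :
    L '' closedConvexConeHull U ⊆ closedConvexConeHull (L '' U) :=
  Set.image_subset_iff.mpr <| closedConvexConeHull_minimal
    (Set.image_subset_iff.mp (subset_closedConvexConeHull _))
    ((isClosed_closedConvexConeHull _).preimage L.continuous)
    ((convex_closedConvexConeHull _).linear_preimage L.toLinearMap)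
    fun c hc x hx => by
      simpa only [Set.mem_preimage, map_smul] using smul_mem_closedConvexConeHull hc hx

theorem closedConvexConeHull_image (L : E ≃L[ℝ] F) (U : Set E) :
    closedConvexConeHull (L '' U) = L '' closedConvexConeHull U := by
  refine subset_antisymm ?_ (image_closedConvexConeHull_subset (L : E →L[ℝ] F) U)
  intro x hx
  refine ⟨L.symm x, ?_, L.apply_symm_apply x⟩
  simpa only [ContinuousLinearEquiv.coe_coe, L.symm_image_image] using
    image_closedConvexConeHull_subset (L.symm : F →L[ℝ] E) (L '' U) ⟨x, hx, rfl⟩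

theorem closedConvexConeHull_prod {S : Set E} {T : Set F} (hS : 0 ∈ S) (hT : 0 ∈ T) :
    closedConvexConeHull (S ×ˢ T) = closedConvexConeHull S ×ˢ closedConvexConeHull T := by
  refine subset_antisymm (closedConvexConeHull_minimal
    (Set.prod_mono (subset_closedConvexConeHull S) (subset_closedConvexConeHull T))
    ((isClosed_closedConvexConeHull S).prod (isClosed_closedConvexConeHull T))
    ((convex_closedConvexConeHull S).prod (convex_closedConvexConeHull T))
    fun _ hc _ hx =>
      ⟨smul_mem_closedConvexConeHull hc hx.1, smul_mem_closedConvexConeHull hc hx.2⟩) ?_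
  rintro ⟨x, y⟩ ⟨hx, hy⟩
  have hx0 : (x, (0 : F)) ∈ closedConvexConeHull (S ×ˢ T) :=
    closedConvexConeHull_mono (by rintro _ ⟨a, ha, rfl⟩; exact ⟨ha, hT⟩)
      (image_closedConvexConeHull_subset (ContinuousLinearMap.inl ℝ E F) S ⟨x, hx, rfl⟩)
  have h0y : ((0 : E), y) ∈ closedConvexConeHull (S ×ˢ T) :=
    closedConvexConeHull_mono (by rintro _ ⟨b, hb, rfl⟩; exact ⟨hS, hb⟩)
      (image_closedConvexConeHull_subset (ContinuousLinearMap.inr ℝ E F) T ⟨y, hy, rfl⟩)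
  simpa using add_mem_closedConvexConeHull hx0 h0y

end ClosedConvexConeHull

theorem closedConvexConeHull_range_natCast :
    closedConvexConeHull (Set.range (Nat.cast : ℕ → ℝ)) = Set.Ici 0 := by
  refine subset_antisymm (closedConvexConeHull_minimal
    (Set.range_subset_iff.mpr fun k => Set.mem_Ici.mpr k.cast_nonneg) isClosed_Ici (convex_Ici 0)
    fun _ hc _ hx => mul_nonneg hc hx) fun r hr => ?_
  simpa using smul_mem_closedConvexConeHull hr
    (subset_closedConvexConeHull (Set.range (Nat.cast : ℕ → ℝ)) ⟨1, Nat.cast_one⟩)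

theorem image_snoc_prod {n : ℕ} {α β : Type*} (f : β → (Fin n → α)) (A : Set β) (B : Set α) :
    (fun p : β × α => (Fin.snoc (f p.1) p.2 : Fin (n + 1) → α)) '' (A ×ˢ B) =
      {q : Fin (n + 1) → α | Fin.init q ∈ f '' A ∧ q (Fin.last n) ∈ B} := by
  ext q
  constructor
  · rintro ⟨⟨a, b⟩, ⟨ha, hb⟩, rfl⟩
    simpa using ⟨⟨a, ha, rfl⟩, hb⟩
  · rintro ⟨⟨a, ha, hq⟩, hb⟩
    exact ⟨(a, q (Fin.last n)), ⟨ha, hb⟩, by simp [hq]⟩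

namespace MvPolynomial

section LastVariable

variable (R : Type*) [CommRing R] (n : ℕ)

noncomputable def lastVarEquiv :
    MvPolynomial (Fin (n + 1)) R ≃ₐ[R] Polynomial (MvPolynomial (Fin n) R) :=
  (renameEquiv R finSuccEquivLast).trans (optionEquivLeft R (Fin n))

variable {R n}

@[simp]
theorem lastVarEquiv_X_last : lastVarEquiv R n (X (Fin.last n)) = Polynomial.X := by
  simp [lastVarEquiv, optionEquivLeft_X_none]

@[simp]
theorem lastVarEquiv_X_castSucc (i : Fin n) :
    lastVarEquiv R n (X i.castSucc) = Polynomial.C (X i) := by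
  simp [lastVarEquiv, finSuccEquivLast_castSucc, optionEquivLeft_X_some]

@[simp]
theorem lastVarEquiv_rename_castSucc (g : MvPolynomial (Fin n) R) :
    lastVarEquiv R n (rename Fin.castSucc g) = Polynomial.C g := by
  have : (lastVarEquiv R n).toAlgHom.comp (rename Fin.castSucc) = Polynomial.CAlgHom := by
    ext i : 1
    simp [Polynomial.CAlgHom]
  exact DFunLike.congr_fun this g

theorem coeff_zero_lastVarEquiv (g : MvPolynomial (Fin (n + 1)) R) :
    (lastVarEquiv R n g).coeff 0 = aeval (Fin.lastCases 0 X) g := by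
  have : Polynomial.constantCoeff.comp (lastVarEquiv R n).toRingHom =
      (aeval (Fin.lastCases 0 X) : MvPolynomial (Fin (n + 1)) R →ₐ[R] _).toRingHom := by
    ext i : 2
    · simp [lastVarEquiv, optionEquivLeft_C]
    · induction i using Fin.lastCases <;> simp
  exact DFunLike.congr_fun this g

theorem mem_map_rename_castSucc_iff {J : Ideal (MvPolynomial (Fin n) R)}
    {f : MvPolynomial (Fin (n + 1)) R} :
    f ∈ J.map (rename Fin.castSucc).toRingHom ↔ ∀ e, (lastVarEquiv R n f).coeff e ∈ J := by
  have : (rename Fin.castSucc : MvPolynomial (Fin n) R →ₐ[R] _).toRingHom =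
      ((lastVarEquiv R n).toRingEquiv.symm : _ →+* _).comp Polynomial.C :=
    RingHom.ext fun g => ((lastVarEquiv R n).eq_symm_apply).mpr (lastVarEquiv_rename_castSucc g)
  rw [this, ← Ideal.map_map, Ideal.map_comap_of_equiv, Ideal.mem_comap, Ideal.mem_map_C_iff]
  rfl

theorem IsHomogeneous.coeff_lastVarEquiv {f : MvPolynomial (Fin (n + 1)) R} {s e : ℕ}
    (hf : f.IsHomogeneous s) (he : (lastVarEquiv R n f).coeff e ≠ 0) :
    e ≤ s ∧ ((lastVarEquiv R n f).coeff e).IsHomogeneous (s - e) := by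
  have hf' : (rename finSuccEquivLast f).IsHomogeneous s := hf.rename_isHomogeneous
  have he_le : e ≤ s := calc
    e ≤ (lastVarEquiv R n f).natDegree := Polynomial.le_natDegree_of_ne_zero he
    _ = (rename finSuccEquivLast f).degreeOf none := natDegree_optionEquivLeft _ _
    _ ≤ (rename finSuccEquivLast f).totalDegree := degreeOf_le_totalDegree _ _
    _ ≤ s := hf'.totalDegree_le
  refine ⟨he_le,
    coeff_isHomogeneous_of_optionEquivLeft_symm (n := s) ?_ e (s - e) (Nat.add_sub_cancel' he_le)⟩
  simpa [lastVarEquiv] using hf'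

theorem apply_eq_trailingCoeff_lastVarEquiv {β : Type*} {w : MvPolynomial (Fin n) R → β}
    {V : MvPolynomial (Fin (n + 1)) R → β × ℤ}
    (hV : ∀ (e : ℕ) (g : MvPolynomial (Fin (n + 1)) R), ¬ X (Fin.last n) ∣ g →
      V (X (Fin.last n) ^ e * g) = (w (aeval (Fin.lastCases 0 X) g), (e : ℤ)))
    {F : MvPolynomial (Fin (n + 1)) R} (hF : F ≠ 0) :
    V F = (w (lastVarEquiv R n F).trailingCoeff,
      ((lastVarEquiv R n F).natTrailingDegree : ℤ)) := by
  set p := lastVarEquiv R n F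
  obtain ⟨q, hpq⟩ : Polynomial.X ^ p.natTrailingDegree ∣ p :=
    Polynomial.X_pow_dvd_iff.mpr fun _ => Polynomial.coeff_eq_zero_of_lt_natTrailingDegree
  have hq : q.coeff 0 = p.trailingCoeff := by
    rw [Polynomial.trailingCoeff, ← zero_add p.natTrailingDegree, ← Polynomial.coeff_X_pow_mul,
      ← hpq]
  set G := (lastVarEquiv R n).symm q
  have hFG : F = X (Fin.last n) ^ p.natTrailingDegree * G :=
    (lastVarEquiv R n).injective (by simp [G, p, ← hpq])
  have hG : ¬ X (Fin.last n) ∣ G := by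
    intro hdvd
    have : Polynomial.X ∣ q := by simpa [G] using map_dvd (lastVarEquiv R n) hdvd
    rw [Polynomial.X_dvd_iff, hq, Polynomial.trailingCoeff_eq_zero] at this
    exact hF ((lastVarEquiv R n).map_eq_zero_iff.mp this)
  rw [hFG, hV _ _ hG, ← coeff_zero_lastVarEquiv, AlgEquiv.apply_symm_apply, hq]

end LastVariable

end MvPolynomial

@[simp]
theorem dehom_X_zero (m : ℕ) : dehom m (X 0) = 1 := by
  simp [dehom]

@[simp]
theorem dehom_X_succ {m : ℕ} (i : Fin m) : dehom m (X i.succ) = X i := by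
  simp [dehom]

theorem lastVarEquiv_dehom {n : ℕ} (f : MvPolynomial (Fin (n + 2)) ℂ) :
    lastVarEquiv ℂ n (dehom (n + 1) f) = (lastVarEquiv ℂ (n + 1) f).map (dehom n) := by
  have : (lastVarEquiv ℂ n).toAlgHom.comp (dehom (n + 1)) =
      (Polynomial.mapAlgHom (dehom n)).comp (lastVarEquiv ℂ (n + 1)).toAlgHom := by
    ext i : 1
    induction i using Fin.cases with
    | zero =>
      change lastVarEquiv ℂ n (dehom (n + 1) (X 0)) =
        (lastVarEquiv ℂ (n + 1) (X (Fin.castSucc 0))).map (dehom n)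
      rw [dehom_X_zero, map_one, lastVarEquiv_X_castSucc]
      simp
    | succ j =>
      induction j using Fin.lastCases with
      | last =>
        change lastVarEquiv ℂ n (dehom (n + 1) (X (Fin.last n).succ)) =
          (lastVarEquiv ℂ (n + 1) (X (Fin.last (n + 1)))).map (dehom n)
        rw [dehom_X_succ, lastVarEquiv_X_last, lastVarEquiv_X_last, Polynomial.map_X]
      | cast k =>
        change lastVarEquiv ℂ n (dehom (n + 1) (X k.castSucc.succ)) =
          (lastVarEquiv ℂ (n + 1) (X k.succ.castSucc)).map (dehom n)
        rw [dehom_X_succ, lastVarEquiv_X_castSucc, lastVarEquiv_X_castSucc]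
        simp
  exact DFunLike.congr_fun this f

theorem mem_idealComponent {m : ℕ} {J : Ideal (MvPolynomial (Fin (m + 1)) ℂ)} {s : ℕ}
    {f : MvPolynomial (Fin (m + 1)) ℂ} :
    f ∈ idealComponent J s ↔ f ∈ J ∧ f.IsHomogeneous s :=
  Iff.rfl

theorem mem_gradedSemigroup {m : ℕ} {w : MvPolynomial (Fin m) ℂ → (Fin m → ℤ)}
    {I : Ideal (MvPolynomial (Fin (m + 1)) ℂ)} {p : (Fin m → ℝ) × ℝ × ℝ} :
    p ∈ gradedSemigroup w I ↔ ∃ s t : ℕ, ∃ f, f ∈ I ^ t ∧ f.IsHomogeneous s ∧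
      dehom m f ≠ 0 ∧ p = (fun i => (w (dehom m f) i : ℝ), (s : ℝ), (t : ℝ)) := by
  simp only [gradedSemigroup, Set.mem_ofPred_eq, Set.mem_image, Set.mem_sdiff,
    Set.mem_singleton_iff, SetLike.mem_coe, mem_idealComponent]
  aesop

theorem zero_mem_gradedSemigroup {m : ℕ} {w : MvPolynomial (Fin m) ℂ → (Fin m → ℤ)}
    (hw : w 1 = 0) (I : Ideal (MvPolynomial (Fin (m + 1)) ℂ)) : 0 ∈ gradedSemigroup w I :=
  mem_gradedSemigroup.mpr ⟨0, 0, 1, by simp, isHomogeneous_one _ _, by simp, by ext <;> simp [hw]⟩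

noncomputable def snocShear (n : ℕ) :
    (((Fin n → ℝ) × ℝ × ℝ) × ℝ) ≃L[ℝ] ((Fin (n + 1) → ℝ) × ℝ × ℝ) :=
  LinearEquiv.toContinuousLinearEquiv
    { toFun := fun p => ((Fin.snoc p.1.1 p.2 : Fin (n + 1) → ℝ), p.1.2.1 + p.2, p.1.2.2)
      invFun := fun q => ((Fin.init q.1, q.2.1 - q.1 (Fin.last n), q.2.2), q.1 (Fin.last n))
      map_add' := fun p q => by
        ext i <;> try induction i using Fin.lastCases
        all_goals simp [add_add_add_comm]
      map_smul' := fun c p => by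
        ext i <;> try induction i using Fin.lastCases
        all_goals simp [mul_add]
      left_inv := fun p => by simp
      right_inv := fun q => by simp }

@[simp]
theorem snocShear_apply {n : ℕ} (p : ((Fin n → ℝ) × ℝ × ℝ) × ℝ) :
    snocShear n p = ((Fin.snoc p.1.1 p.2 : Fin (n + 1) → ℝ), p.1.2.1 + p.2, p.1.2.2) :=
  rfl

theorem snocShear_natCast {n : ℕ} (a : Fin n → ℤ) (s t e : ℕ) :
    snocShear n ((fun i => (a i : ℝ), (s : ℝ), (t : ℝ)), (e : ℝ)) =
      (fun i => ((Fin.snoc a (e : ℤ) : Fin (n + 1) → ℤ) i : ℝ), ((s + e : ℕ) : ℝ), (t : ℝ)) := by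
  ext i <;> try induction i using Fin.lastCases
  all_goals simp

theorem gradedSemigroup_map_rename_castSucc {n : ℕ} {w : MvPolynomial (Fin n) ℂ → (Fin n → ℤ)}
    {V : MvPolynomial (Fin (n + 1)) ℂ → (Fin n → ℤ) × ℤ}
    (hV : ∀ (e : ℕ) (g : MvPolynomial (Fin (n + 1)) ℂ), ¬ X (Fin.last n) ∣ g →
      V (X (Fin.last n) ^ e * g) = (w (aeval (Fin.lastCases 0 X) g), (e : ℤ)))
    (I : Ideal (MvPolynomial (Fin (n + 1)) ℂ)) :
    gradedSemigroup (fun f => Fin.snoc (V f).1 (V f).2) (I.map (rename Fin.castSucc).toRingHom) =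
      snocShear n '' (gradedSemigroup w I ×ˢ Set.range (Nat.cast : ℕ → ℝ)) := by
  ext p
  simp only [mem_gradedSemigroup, Set.mem_image, Set.mem_prod, Set.mem_range, ← Ideal.map_pow]
  constructor
  · rintro ⟨s, t, f, hfI, hfs, hf0, rfl⟩
    set q := lastVarEquiv ℂ n (dehom (n + 1) f) with hq_def
    have hq : q.trailingCoeff ≠ 0 := by simpa [q] using hf0
    set e := q.natTrailingDegree
    set c := (lastVarEquiv ℂ (n + 1) f).coeff e
    have hc : dehom n c = q.trailingCoeff := by
      change _ = q.coeff e
      rw [hq_def, lastVarEquiv_dehom, Polynomial.coeff_map]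
      rfl
    have hc0 : c ≠ 0 := fun h => hq (by rw [← hc, h, map_zero])
    obtain ⟨hes, hcs⟩ := hfs.coeff_lastVarEquiv hc0
    refine ⟨((fun i => (w (dehom n c) i : ℝ), ((s - e : ℕ) : ℝ), (t : ℝ)), (e : ℝ)),
      ⟨⟨s - e, t, c, mem_map_rename_castSucc_iff.mp hfI e, hcs, hc ▸ hq, rfl⟩, e, rfl⟩, ?_⟩
    rw [snocShear_natCast, Nat.sub_add_cancel hes, apply_eq_trailingCoeff_lastVarEquiv hV hf0,
      hc]
  · rintro ⟨⟨_, _⟩, ⟨⟨s, t, h, hhI, hhs, hh0, rfl⟩, e, rfl⟩, rfl⟩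
    set f := rename Fin.castSucc h * X (Fin.last (n + 1)) ^ e
    have hf : lastVarEquiv ℂ n (dehom (n + 1) f) = Polynomial.monomial e (dehom n h) := by
      simp [f, lastVarEquiv_dehom, Polynomial.C_mul_X_pow_eq_monomial]
    have hf0 : dehom (n + 1) f ≠ 0 := fun h0 => hh0 (by simpa [h0] using hf.symm)
    refine ⟨s + e, t, f, Ideal.mul_mem_right _ _ (Ideal.mem_map_of_mem _ hhI),
      hhs.rename_isHomogeneous.mul (isHomogeneous_X_pow _ _), hf0, ?_⟩
    rw [snocShear_natCast, apply_eq_trailingCoeff_lastVarEquiv hV hf0, hf,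
      Polynomial.natTrailingDegree_monomial hh0, Polynomial.trailingCoeff,
      Polynomial.natTrailingDegree_monomial hh0, Polynomial.coeff_monomial_same]

theorem underlineDelta_map_rename_castSucc {n : ℕ} {w : MvPolynomial (Fin n) ℂ → (Fin n → ℤ)}
    {V : MvPolynomial (Fin (n + 1)) ℂ → (Fin n → ℤ) × ℤ}
    (hV : ∀ (e : ℕ) (g : MvPolynomial (Fin (n + 1)) ℂ), ¬ X (Fin.last n) ∣ g →
      V (X (Fin.last n) ^ e * g) = (w (aeval (Fin.lastCases 0 X) g), (e : ℤ)))
    (I : Ideal (MvPolynomial (Fin (n + 1)) ℂ)) (hw : w 1 = 0) :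
    underlineDelta (fun f => Fin.snoc (V f).1 (V f).2) (I.map (rename Fin.castSucc).toRingHom) =
      (fun p : ((Fin n → ℝ) × ℝ) × ℝ => ((Fin.snoc p.1.1 p.2 : Fin (n + 1) → ℝ), p.1.2 + p.2)) ''
        (underlineDelta w I ×ˢ Set.Ici 0) := by
  have hull : closedConvexConeHull (gradedSemigroup (fun f => Fin.snoc (V f).1 (V f).2)
      (I.map (rename Fin.castSucc).toRingHom)) =
      snocShear n '' (closedConvexConeHull (gradedSemigroup w I) ×ˢ Set.Ici 0) := by
    rw [gradedSemigroup_map_rename_castSucc hV, closedConvexConeHull_image,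
      closedConvexConeHull_prod (zero_mem_gradedSemigroup hw I)
        (⟨0, Nat.cast_zero⟩ : (0 : ℝ) ∈ Set.range (Nat.cast : ℕ → ℝ)),
      closedConvexConeHull_range_natCast]
  ext ⟨b, r⟩
  simp only [underlineDelta, hull, Set.mem_ofPred_eq, Set.mem_image, Set.mem_prod]
  aesop

theorem tauMap_snoc {n : ℕ} (a : Fin n → ℝ) (s e : ℝ) :
    tauMap (n + 1) (Fin.snoc a e, s + e) = Fin.snoc (tauMap n (a, s)) e := by
  simp [tauMap, Fin.sum_univ_castSucc, Fin.cons_snoc_eq_snoc_cons]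

theorem NObody_extension_general (n : ℕ)
    (v : MvPolynomial (Fin n) ℂ → Lex (Fin n → ℤ))
    (hv_const : ∀ c : ℂ, c ≠ 0 → v (C c) = 0)
    (v' : MvPolynomial (Fin (n + 1)) ℂ → (Fin n → ℤ) × ℤ)
    (hv'_def : ∀ (e : ℕ) (g : MvPolynomial (Fin (n + 1)) ℂ),
      ¬ (X (Fin.last n) ∣ g) →
      v' (X (Fin.last n) ^ e * g) =
        (ofLex (v (aeval (Fin.lastCases 0 X) g)), (e : ℤ)))
    (I : Ideal (MvPolynomial (Fin (n + 1)) ℂ))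
    (I' : Ideal (MvPolynomial (Fin (n + 2)) ℂ))
    (hI' : I' = Ideal.map (rename (Fin.castSucc : Fin (n + 1) → Fin (n + 2))).toRingHom I) :
    NObody (fun f => Fin.snoc (v' f).1 ((v' f).2 : ℤ)) I' =
      {q : Fin (n + 2) → ℝ |
        (fun i : Fin (n + 1) => q i.castSucc) ∈ NObody (fun f => ofLex (v f)) I ∧
        0 ≤ q (Fin.last (n + 1))} := by
  subst hI'
  have hv1 : ofLex (v 1) = 0 := by simpa using hv_const 1 one_ne_zero
  rw [NObody, underlineDelta_map_rename_castSucc (w := fun f => ofLex (v f)) hv'_def I hv1,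
    Set.image_image]
  simp only [tauMap_snoc]
  exact image_snoc_prod (tauMap n) _ _

/-- Let `v` be a `ℤⁿ`-valued valuation on `ℂ[x₁,…,xₙ]` with
`#v(L∖{0}) = dim L` for all finite-dimensional subspaces `L`, and let `v'` be its extension
to `ℂ[x₁,…,x_{n+1}]`, `v'(x_{n+1}^e·g) = (v(g|_{x_{n+1}=0}), e)`. Let `I ⊆ ℂ[x₀,…,xₙ]` be a
homogeneous ideal and `I' ⊆ ℂ[x₀,…,x_{n+1}]` its extension. Then
`Δ(I') = Δ(I) × ℝ_{≥0}` for the associated Newton–Okounkov bodies. -/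
theorem NObody_extension (n : ℕ)
    (v : MvPolynomial (Fin n) ℂ → Lex (Fin n → ℤ))
    (hv_mul : ∀ f g : MvPolynomial (Fin n) ℂ, f ≠ 0 → g ≠ 0 → v (f * g) = v f + v g)
    (hv_add : ∀ f g : MvPolynomial (Fin n) ℂ, f ≠ 0 → g ≠ 0 → f + g ≠ 0 →
      min (v f) (v g) ≤ v (f + g))
    (hv_const : ∀ c : ℂ, c ≠ 0 → v (C c) = 0)
    (hv_card : ∀ L : Submodule ℂ (MvPolynomial (Fin n) ℂ), FiniteDimensional ℂ L →
      (v '' ((L : Set (MvPolynomial (Fin n) ℂ)) \ {0})).ncard = Module.finrank ℂ L)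
    (v' : MvPolynomial (Fin (n + 1)) ℂ → (Fin n → ℤ) × ℤ)
    (hv'_def : ∀ (e : ℕ) (g : MvPolynomial (Fin (n + 1)) ℂ),
      ¬ (X (Fin.last n) ∣ g) →
      v' (X (Fin.last n) ^ e * g) =
        (ofLex (v (aeval (Fin.lastCases 0 X) g)), (e : ℤ)))
    (I : Ideal (MvPolynomial (Fin (n + 1)) ℂ))
    (hI : ∃ S : Set (MvPolynomial (Fin (n + 1)) ℂ),
      (∀ f ∈ S, ∃ e : ℕ, f.IsHomogeneous e) ∧ I = Ideal.span S)
    (I' : Ideal (MvPolynomial (Fin (n + 2)) ℂ))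
    (hI' : I' = Ideal.map (rename (Fin.castSucc : Fin (n + 1) → Fin (n + 2))).toRingHom I) :
    NObody (fun f => Fin.snoc (v' f).1 ((v' f).2 : ℤ)) I' =
      {q : Fin (n + 2) → ℝ |
        (fun i : Fin (n + 1) => q i.castSucc) ∈ NObody (fun f => ofLex (v f)) I ∧
        0 ≤ q (Fin.last (n + 1))} :=
  NObody_extension_general n v hv_const v' hv'_def I I' hI'
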